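/- Let p, q ∈ ℂ^{n+1} be nonzero with 0 < d(p,q) < π/2, and let u ∈ ℂ^{n+1} satisfy |u| = 1 and u·p̄ = 0. Then the function s ↦ d(cos s·(p/|p|) + sin s·u, q) is differentiable at s = 0 with derivative −Re(u·conj(γ₀'(p,q))). (Equivalently, the gradient of the distance to q at p is −γ₀'(p,q).) -/

import Mathlib

noncomputable section

/-- Hermitian product `w·z̄ = Σᵢ wⁱ·conj(zⁱ)` on `ℂ^m`. -/
def herm {m : ℕ} (w z : EuclideanSpace ℂ (Fin m)) : ℂ :=
  ∑ i, w i * (starRingEnd ℂ) (z i)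

/-- Fubini–Study distance between (the projective classes of) `p` and `q`. -/
def fsDist {m : ℕ} (p q : EuclideanSpace ℂ (Fin m)) : ℝ :=
  Real.arccos (‖herm p q‖ / (‖p‖ * ‖q‖))

/-- Initial velocity `γ₀'(p,q)` of the geodesic from `[p]` to `[q]`. -/
def gammaDir {m : ℕ} (p q : EuclideanSpace ℂ (Fin m)) : EuclideanSpace ℂ (Fin m) :=
  (Real.cot (fsDist p q) : ℂ) • (((‖p‖ : ℂ) / herm q p) • q - (‖p‖ : ℂ)⁻¹ • p)

/-- The geodesic `γ_t(p,q) = cos t·(p/|p|) + sin t·γ₀'(p,q)`. -/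
def geo {m : ℕ} (t : ℝ) (p q : EuclideanSpace ℂ (Fin m)) : EuclideanSpace ℂ (Fin m) :=
  (Real.cos t : ℂ) • ((‖p‖ : ℂ)⁻¹ • p) + (Real.sin t : ℂ) • gammaDir p q

/-- The velocity `γ_t'(p,q) = −sin t·(p/|p|) + cos t·γ₀'(p,q)`. -/
def geoVel {m : ℕ} (t : ℝ) (p q : EuclideanSpace ℂ (Fin m)) : EuclideanSpace ℂ (Fin m) :=
  (-(Real.sin t) : ℂ) • ((‖p‖ : ℂ)⁻¹ • p) + (Real.cos t : ℂ) • gammaDir p q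

/-!
Write `P = p/|p|`, `A = P·q̄` and `B = u·q̄`. The curve `c(s) = cos s·P + sin s·u` stays on the unit
sphere and `c(s)·q̄ = cos s·A + sin s·B`, so the function is `s ↦ arccos (|cos s·A + sin s·B| / |q|)`.
Since `|A|/|q| = cos d` for `d = d(p,q)`, the chain rule gives the derivative `-cot d · Re (B/A)`
at `0`. On the other side, `u ⊥ p` kills the `p`-component of `γ₀'`, leaving `u·conj(γ₀') = cot d · B/A`.
-/

open Real
open scoped InnerProductSpace

theorem HasDerivAt.norm {F : Type*} [NormedAddCommGroup F] [InnerProductSpace ℝ F]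
    {f : ℝ → F} {f' : F} {x : ℝ} (hf : HasDerivAt f f' x) (h0 : f x ≠ 0) :
    HasDerivAt (‖f ·‖) (⟪f x, f'⟫_ℝ / ‖f x‖) x := by
  have hsq := hf.norm_sq.sqrt (by positivity)
  simp only [sqrt_sq (norm_nonneg _)] at hsq
  exact hsq.congr_deriv (by field_simp)

theorem hasDerivAt_cos_mul_add_sin_mul (A B : ℂ) :
    HasDerivAt (fun s : ℝ => (cos s : ℂ) * A + (sin s : ℂ) * B) B 0 := by
  simpa using ((hasDerivAt_cos 0).ofReal_comp.mul_const A).fun_add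
    ((hasDerivAt_sin 0).ofReal_comp.mul_const B)

theorem hasDerivAt_arccos_norm_div {g : ℝ → ℂ} {g' : ℂ} {t c : ℝ} (hg : HasDerivAt g g' t)
    (hpos : 0 < ‖g t‖ / c) (hlt : ‖g t‖ / c < 1) :
    HasDerivAt (fun s => arccos (‖g s‖ / c))
      (-(cot (arccos (‖g t‖ / c)) * (g' / g t).re)) t := by
  have hg0 : g t ≠ 0 := by rintro h; simp [h] at hpos
  have hc : c ≠ 0 := by rintro rfl; simp at hpos
  have hroot : 0 < √(1 - (‖g t‖ / c) ^ 2) := sqrt_pos.2 (by nlinarith)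
  refine ((hasDerivAt_arccos (by linarith) hlt.ne).comp t
    ((hg.norm hg0).div_const c)).congr_deriv ?_
  -- `cot (arccos x) = x / √(1 - x²)` and `‖g‖' = ‖g‖ · Re (g' / g)`
  rw [cot_eq_cos_div_sin, cos_arccos (by linarith) hlt.le, sin_arccos, Complex.inner,
    Complex.div_re, ← Complex.sq_norm]
  have : ‖g t‖ ≠ 0 := norm_ne_zero_iff.2 hg0
  simp only [Complex.mul_re, Complex.conj_re, Complex.conj_im]
  field_simp
  ring

theorem norm_cos_smul_add_sin_smul {E : Type*} [NormedAddCommGroup E] [InnerProductSpace ℂ E]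
    {x y : E} (hx : ‖x‖ = 1) (hy : ‖y‖ = 1) (hxy : ⟪x, y⟫_ℂ = 0) (s : ℝ) :
    ‖(cos s : ℂ) • x + (sin s : ℂ) • y‖ = 1 := by
  have horth : ⟪(cos s : ℂ) • x, (sin s : ℂ) • y⟫_ℂ = 0 := by
    rw [inner_smul_left, inner_smul_right, hxy, mul_zero, mul_zero]
  have hsq : ‖(cos s : ℂ) • x + (sin s : ℂ) • y‖ ^ 2 = 1 := by
    rw [norm_add_sq (𝕜 := ℂ), horth, norm_smul, norm_smul, hx, hy, Complex.norm_real,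
      Complex.norm_real]
    simp [cos_sq_add_sin_sq]
  exact (pow_eq_one_iff_of_nonneg (norm_nonneg _) two_ne_zero).1 hsq

section FubiniStudy

variable {m : ℕ}

theorem herm_eq_inner (w z : EuclideanSpace ℂ (Fin m)) : herm w z = ⟪z, w⟫_ℂ := by
  simp [herm, PiLp.inner_apply]

theorem fsDist_smul_left {c : ℂ} (hc : c ≠ 0) (p q : EuclideanSpace ℂ (Fin m)) :
    fsDist (c • p) q = fsDist p q := by
  have hc' : ‖c‖ ≠ 0 := norm_ne_zero_iff.2 hc
  rw [fsDist, fsDist, herm_eq_inner, inner_smul_right, norm_mul, norm_smul, ← herm_eq_inner,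
    mul_assoc, mul_div_mul_left _ _ hc']

theorem fsDist_of_norm_eq_one {x : EuclideanSpace ℂ (Fin m)} (hx : ‖x‖ = 1)
    (q : EuclideanSpace ℂ (Fin m)) : fsDist x q = arccos (‖herm x q‖ / ‖q‖) := by
  rw [fsDist, hx, one_mul]

theorem herm_gammaDir {u p : EuclideanSpace ℂ (Fin m)} (hup : herm u p = 0)
    (q : EuclideanSpace ℂ (Fin m)) :
    herm u (gammaDir p q) = (cot (fsDist p q) : ℂ) * (‖p‖ / herm p q * herm u q) := by
  rw [herm_eq_inner] at hup
  rw [herm_eq_inner, gammaDir, inner_smul_left, inner_sub_left, inner_smul_left,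
    inner_smul_left, hup, mul_zero, sub_zero, map_div₀, Complex.conj_ofReal, Complex.conj_ofReal,
    herm_eq_inner q p, inner_conj_symm, ← herm_eq_inner, ← herm_eq_inner]

end FubiniStudy

theorem stmt4_general {n : ℕ} (p q : EuclideanSpace ℂ (Fin (n + 1))) (hp : p ≠ 0)
    (hd0 : 0 < fsDist p q) (hd2 : fsDist p q < Real.pi / 2)
    (u : EuclideanSpace ℂ (Fin (n + 1))) (hu : ‖u‖ = 1) (hup : herm u p = 0) :
    HasDerivAt
      (fun s : ℝ => fsDist ((Real.cos s : ℂ) • ((‖p‖ : ℂ)⁻¹ • p) + (Real.sin s : ℂ) • u) q)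
      (-(herm u (gammaDir p q)).re) 0 := by
  have hpn : ‖p‖ ≠ 0 := norm_ne_zero_iff.2 hp
  set P := (‖p‖ : ℂ)⁻¹ • p
  have hP : ‖P‖ = 1 := by
    rw [norm_smul, norm_inv, Complex.norm_real, norm_norm, inv_mul_cancel₀ hpn]
  have hPu : ⟪P, u⟫_ℂ = 0 := by rw [inner_smul_left, ← herm_eq_inner, hup, mul_zero]
  have hPq : herm P q = (‖p‖ : ℂ)⁻¹ * herm p q := by
    rw [herm_eq_inner, inner_smul_right, ← herm_eq_inner]
  have hd : fsDist p q = arccos (‖herm P q‖ / ‖q‖) := by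
    rw [← fsDist_smul_left (inv_ne_zero (Complex.ofReal_ne_zero.2 hpn)) p q, fsDist_of_norm_eq_one hP]
  have hcurve (s : ℝ) : fsDist ((cos s : ℂ) • P + (sin s : ℂ) • u) q
      = arccos (‖(cos s : ℂ) * herm P q + (sin s : ℂ) * herm u q‖ / ‖q‖) := by
    rw [fsDist_of_norm_eq_one (norm_cos_smul_add_sin_smul hP hu hPu s)]
    simp only [herm_eq_inner, inner_add_right, inner_smul_right]
  rw [hd, arccos_pos] at hd0
  rw [hd, arccos_lt_pi_div_two] at hd2
  have hg := hasDerivAt_cos_mul_add_sin_mul (herm P q) (herm u q)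
  have hg0 : (cos 0 : ℂ) * herm P q + (sin 0 : ℂ) * herm u q = herm P q := by simp
  have key := hasDerivAt_arccos_norm_div hg (by rwa [hg0]) (by rwa [hg0])
  rw [hg0, ← hd] at key
  convert key using 1
  · exact funext hcurve
  · rw [herm_gammaDir hup, Complex.re_ofReal_mul, hPq]
    congr 3
    field_simp

theorem stmt4 {n : ℕ} (p q : EuclideanSpace ℂ (Fin (n + 1))) (hp : p ≠ 0) (hq : q ≠ 0)
    (hd0 : 0 < fsDist p q) (hd2 : fsDist p q < Real.pi / 2)
    (u : EuclideanSpace ℂ (Fin (n + 1))) (hu : ‖u‖ = 1) (hup : herm u p = 0) :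
    HasDerivAt
      (fun s : ℝ => fsDist ((Real.cos s : ℂ) • ((‖p‖ : ℂ)⁻¹ • p) + (Real.sin s : ℂ) • u) q)
      (-(herm u (gammaDir p q)).re) 0 :=
  stmt4_general p q hp hd0 hd2 u hu hup
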